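/- For every positive integer k and real σ > 0, the 2k-th moment φ(log^{2k} Y) = (2k)! Σ_{i=0}^{2k} f_i σ^{4k-2i}/(2^{2k-i}(2k-i)!), with f_0 = 1 and f_i = Σ_{j=⌈i/2⌉}^{i} s(j+1, i+1-j) σ^{2j}/(j!(j+1)!) for i ≥ 1, is a polynomial in σ² whose lowest-order term is C_k · σ^{2k}, where C_k is the k-th Catalan number. -/

import Mathlib

open Finset

/-- Signed Stirling numbers of the first kind, via the recurrence
`s(n+1, k+1) = s(n, k) - n·s(n, k+1)`. -/
def stirlingFirst : ℕ → ℕ → ℤ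
  | 0, 0 => 1
  | 0, _ + 1 => 0
  | _ + 1, 0 => 0
  | n + 1, k + 1 => stirlingFirst n k - n * stirlingFirst n (k + 1)

/-- The coefficients `f_i` (depending on `σ`): `f_0 = 1` and
`f_i = Σ_{j=⌈i/2⌉}^{i} s(j+1, i+1-j) σ^{2j}/(j!(j+1)!)` for `i ≥ 1`. -/
noncomputable def fCoef (σ : ℝ) : ℕ → ℝ
  | 0 => 1
  | i + 1 =>
    ∑ j ∈ Finset.Icc ((i + 2) / 2) (i + 1),
      (stirlingFirst (j + 1) (i + 2 - j) : ℝ) * σ ^ (2 * j) / (j.factorial * (j + 1).factorial)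

/-- The `2k`-th moment `φ(log^{2k} Y)` expressed by the closed formula. -/
noncomputable def logMoment (k : ℕ) (σ : ℝ) : ℝ :=
  ((2 * k).factorial : ℝ) *
    ∑ i ∈ Finset.range (2 * k + 1),
      fCoef σ i * σ ^ (4 * k - 2 * i) / (2 ^ (2 * k - i) * ((2 * k - i).factorial : ℝ))

/-!
Expanding each `f_i`, the `(i, j)`-term of the resulting double sum is a multiple of
`σ^(2j) σ^(4k - 2i) = (σ²)^(2k - i + j)`. The constraints `⌈i/2⌉ ≤ j ≤ i ≤ 2k` put the degree
`2k - i + j` in `[k, 2k]`, and it equals `k` only for `i = 2k`, `j = k`, whose coefficient is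
`(2k)! s(k+1, k+1) / (k! (k+1)!) = C_k`.
-/

theorem Finset.sum_mul_pow_eq_sum_range {ι R : Type*} [CommSemiring R] (s : Finset ι)
    (a : ι → R) (e : ι → ℕ) {k n : ℕ} (he : ∀ x ∈ s, e x ∈ Icc k (k + n)) (y : R) :
    ∑ x ∈ s, a x * y ^ e x =
      ∑ m ∈ range (n + 1), (∑ x ∈ s with e x = k + m, a x) * y ^ (k + m) := by
  have hmaps : ∀ x ∈ s, e x - k ∈ range (n + 1) := fun x hx => by
    have := mem_Icc.1 (he x hx); rw [mem_range]; omega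
  rw [← sum_fiberwise_of_maps_to hmaps]
  refine sum_congr rfl fun m _ => ?_
  rw [sum_mul]
  refine sum_congr (filter_congr fun x hx => ?_) fun x hx => ?_
  · have := mem_Icc.1 (he x hx); omega
  · rw [(mem_filter.1 hx).2]

theorem stirlingFirst_eq_zero_of_lt {n k : ℕ} (h : n < k) : stirlingFirst n k = 0 := by
  induction n generalizing k with
  | zero => obtain ⟨k, rfl⟩ := Nat.exists_eq_succ_of_ne_zero (by omega : k ≠ 0); rfl
  | succ n ih =>
    obtain ⟨k, rfl⟩ := Nat.exists_eq_succ_of_ne_zero (by omega : k ≠ 0)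
    rw [stirlingFirst, ih (by omega), ih (by omega), mul_zero, sub_zero]

@[simp]
theorem stirlingFirst_self (n : ℕ) : stirlingFirst n n = 1 := by
  induction n with
  | zero => rfl
  | succ n ih =>
    rw [stirlingFirst, ih, stirlingFirst_eq_zero_of_lt n.lt_succ_self, mul_zero, sub_zero]

theorem catalan_mul_factorial_mul_factorial (n : ℕ) :
    catalan n * (n.factorial * (n + 1).factorial) = (2 * n).factorial := by
  have := Nat.add_choose_mul_factorial_mul_factorial n n
  rw [← two_mul, ← Nat.centralBinom_eq_two_mul_choose, ← succ_mul_catalan_eq_centralBinom] at this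
  rw [← this, Nat.factorial_succ]; ring

/-- The general formula also covers `f_0 = 1`, because `s(1, 1) = 1`. -/
theorem fCoef_eq_sum (σ : ℝ) (i : ℕ) :
    fCoef σ i = ∑ j ∈ Icc ((i + 1) / 2) i,
      (stirlingFirst (j + 1) (i + 1 - j) : ℝ) * σ ^ (2 * j) / (j.factorial * (j + 1).factorial) := by
  cases i with
  | zero => simp [fCoef]
  | succ i => rfl

/-- `⟨i, j⟩` indexes the `j`-th summand of `f_i` in `logMoment k`; that term is a multiple of
`(σ²) ^ logMomentDegree k ⟨i, j⟩`. -/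
def logMomentIndex (k : ℕ) : Finset (Σ _ : ℕ, ℕ) :=
  (range (2 * k + 1)).sigma fun i => Icc ((i + 1) / 2) i

noncomputable def logMomentCoeff (k : ℕ) (x : Σ _ : ℕ, ℕ) : ℝ :=
  (2 * k).factorial * stirlingFirst (x.2 + 1) (x.1 + 1 - x.2) /
    (x.2.factorial * (x.2 + 1).factorial * 2 ^ (2 * k - x.1) * (2 * k - x.1).factorial)

def logMomentDegree (k : ℕ) (x : Σ _ : ℕ, ℕ) : ℕ := 2 * k - x.1 + x.2

theorem logMoment_eq_sum_logMomentIndex (k : ℕ) (σ : ℝ) :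
    logMoment k σ =
      ∑ x ∈ logMomentIndex k, logMomentCoeff k x * (σ ^ 2) ^ logMomentDegree k x := by
  rw [logMoment, logMomentIndex, sum_sigma, mul_sum]
  refine sum_congr rfl fun i hi => ?_
  rw [fCoef_eq_sum, sum_mul, sum_div, mul_sum]
  refine sum_congr rfl fun j _ => ?_
  have hexp : 2 * j + (4 * k - 2 * i) = 2 * logMomentDegree k ⟨i, j⟩ := by
    rw [mem_range] at hi; simp only [logMomentDegree]; omega
  rw [logMomentCoeff, ← pow_mul, ← hexp, pow_add]
  ring

theorem logMomentDegree_mem_Icc {k : ℕ} {x : Σ _ : ℕ, ℕ} (hx : x ∈ logMomentIndex k) :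
    logMomentDegree k x ∈ Icc k (k + k) := by
  simp only [logMomentIndex, mem_sigma, mem_range, mem_Icc] at hx
  simp only [logMomentDegree, mem_Icc]
  omega

theorem filter_logMomentDegree_eq_self (k : ℕ) :
    {x ∈ logMomentIndex k | logMomentDegree k x = k} = {⟨2 * k, k⟩} := by
  ext ⟨i, j⟩
  rw [mem_filter, mem_singleton]
  simp only [logMomentIndex, logMomentDegree, mem_sigma, mem_range, mem_Icc, Sigma.mk.inj_iff,
    heq_eq_eq]
  omega

theorem logMomentCoeff_two_mul_self (k : ℕ) : logMomentCoeff k ⟨2 * k, k⟩ = catalan k := by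
  rw [logMomentCoeff, ← catalan_mul_factorial_mul_factorial]
  simp only [show 2 * k + 1 - k = k + 1 by omega, stirlingFirst_self, Nat.sub_self,
    Nat.factorial_zero]
  have : (k.factorial * (k + 1).factorial : ℝ) ≠ 0 := by positivity
  push_cast
  field_simp

theorem logMoment_lowest_term_general (k : ℕ) :
    ∃ c : ℕ → ℝ, c 0 = (catalan k : ℝ) ∧
      ∀ σ : ℝ, 0 < σ →
        logMoment k σ = ∑ i ∈ Finset.range (k + 1), c i * σ ^ (2 * k + 2 * i) := by
  refine ⟨fun m => ∑ x ∈ logMomentIndex k with logMomentDegree k x = k + m, logMomentCoeff k x,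
    ?_, fun σ _ => ?_⟩
  · simp only [add_zero, filter_logMomentDegree_eq_self, sum_singleton, logMomentCoeff_two_mul_self]
  · rw [logMoment_eq_sum_logMomentIndex,
      sum_mul_pow_eq_sum_range _ _ _ fun x hx => logMomentDegree_mem_Icc hx]
    simp only [← pow_mul, mul_add]

/-- `φ(log^{2k} Y)` is a polynomial in `σ²` with lowest-order term `C_k σ^{2k}`. -/
theorem logMoment_lowest_term (k : ℕ) (hk : 0 < k) :
    ∃ c : ℕ → ℝ, c 0 = (catalan k : ℝ) ∧
      ∀ σ : ℝ, 0 < σ →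
        logMoment k σ = ∑ i ∈ Finset.range (k + 1), c i * σ ^ (2 * k + 2 * i) :=
  logMoment_lowest_term_general k
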